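/- For the random walk on the half-line, suppose in addition that 𝔼[r^{Z^+}] = ∞ for every r > 1. Then 𝔼_0[r^{τ_0}] = ∞ for every r > 1; that is, the return time of the chain to the atom 0 has no finite geometric moment. -/

import Mathlib

open MeasureTheory ProbabilityTheory ENNReal

/-- The random walk on the half-line `X_{n+1} = (X_n + Z_{n+1})⁺` started at `x`. -/
noncomputable def walk {Ω : Type*} (Z : ℕ → Ω → ℝ) (x : ℝ) : ℕ → Ω → ℝ
  | 0 => fun _ => x
  | n + 1 => fun ω => max (walk Z x n ω + Z (n + 1) ω) 0

/-- First return time of the walk to the atom `0`: `τ_0 = inf{n ≥ 1 : X_n = 0}`. -/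
noncomputable def hitZeroTime {Ω : Type*} (Z : ℕ → Ω → ℝ) (x : ℝ) (ω : Ω) : ℕ∞ :=
  ⨅ (n : ℕ) (_ : 1 ≤ n ∧ walk Z x n ω = 0), (n : ℕ∞)

/-- The geometric moment `r^t` for a possibly infinite time `t ∈ ℕ∞` (with `r^∞ = ∞`). -/
noncomputable def geomMoment (r : ℝ≥0∞) (t : ℕ∞) : ℝ≥0∞ :=
  if t = ⊤ then ⊤ else r ^ t.toNat

/-! By the strong law of large numbers there is an `M` such that, with positive probability, the
partial sums of `Z 2, Z 3, …` stay above the line `n ↦ -2μn - M` forever; call this event `B`.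
On `B` an increment `Z 1 ≥ 2μk + M` keeps the walk started at `0` strictly positive up to time
`k`, so independence gives `ℙ(τ₀ > k) ≥ ℙ(B) ℙ(Z ≥ 2μk + M)`. Now
`𝔼 r^τ₀ ≥ (r - 1) ∑ₖ rᵏ ℙ(τ₀ > k)`, and `∑ₖ rᵏ ℙ(Z ≥ 2μk + M) = ∞` is the heavy-tail assumption
`𝔼 ρ^Z⁺ = ∞` for `ρ = r^(1/(2μ))`. -/

open Finset Filter Topology

theorem ProbabilityTheory.iIndepFun.indepFun_tail {Ω : Type*} [MeasurableSpace Ω]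
    {μ : Measure Ω} {Z : ℕ → Ω → ℝ} (hZ : ∀ n, Measurable (Z n)) (h : iIndepFun Z μ) (n : ℕ) :
    IndepFun (Z n) (fun ω i => Z (i + n + 1) ω) μ := by
  have key := indep_iSup_of_disjoint (fun i => (hZ i).comap_le) h.iIndep
    (Set.disjoint_singleton_left.2 (lt_irrefl n) : Disjoint {n} (Set.Ioi n))
  rw [_root_.iSup_singleton] at key
  refine indep_of_indep_of_le_right key (Measurable.comap_le ?_)
  -- measurability with respect to `⨆ i > n, σ(Z i)`, not the ambient σ-algebra
  exact @measurable_pi_lambda _ _ _ (_) _ _ fun i =>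
    Measurable.of_comap_le (le_iSup₂_of_le (i + n + 1) (Set.mem_Ioi.2 (by omega)) le_rfl)

theorem exists_forall_mul_sub_le_of_tendsto {s : ℕ → ℝ} {m a : ℝ}
    (hs : Tendsto (fun n : ℕ => (n : ℝ)⁻¹ * s n) atTop (𝓝 m)) (ham : a < m) :
    ∃ M : ℝ, ∀ n : ℕ, a * n - M ≤ s n := by
  have hev : ∀ᶠ n : ℕ in atTop, a * n - s n ≤ 0 := by
    filter_upwards [hs.eventually (eventually_gt_nhds ham), eventually_gt_atTop 0] with n hn hn0
    have hn0 : (0 : ℝ) < n := Nat.cast_pos.2 hn0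
    rw [lt_inv_mul_iff₀ hn0] at hn
    linarith
  obtain ⟨M, hM⟩ := (isBoundedUnder_of_eventually_le hev).bddAbove_range
  exact ⟨M, fun n => by linarith [hM ⟨n, rfl⟩]⟩

theorem MeasureTheory.exists_measure_ne_zero_of_ae_exists {Ω ι : Type*} [MeasurableSpace Ω]
    [Countable ι] {μ : Measure Ω} [NeZero μ] {p : ι → Ω → Prop} (h : ∀ᵐ ω ∂μ, ∃ i, p i ω) :
    ∃ i, μ {ω | p i ω} ≠ 0 := by
  by_contra! hnull
  have hnot : ∀ᵐ ω ∂μ, ∀ i, ¬ p i ω :=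
    ae_all_iff.2 fun i => measure_eq_zero_iff_ae_notMem.1 (hnull i)
  have : ∀ᵐ ω ∂μ, False := by
    filter_upwards [h, hnot] with ω ⟨i, hi⟩ hnot using hnot i hi
  exact NeZero.ne μ (ae_eq_bot.1 (eventually_false_iff_eq_bot.1 this))

theorem exists_measure_forall_mul_sub_le_sum_ne_zero {Ω : Type*} [MeasurableSpace Ω]
    {μ : Measure Ω} [IsProbabilityMeasure μ] {Y : ℕ → Ω → ℝ} (hint : Integrable (Y 0) μ)
    (hindep : Pairwise fun i j => IndepFun (Y i) (Y j) μ)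
    (hident : ∀ i, IdentDistrib (Y i) (Y 0) μ μ) {a : ℝ} (ha : a < ∫ ω, Y 0 ω ∂μ) :
    ∃ M : ℕ, μ {ω | ∀ n : ℕ, a * n - M ≤ ∑ i ∈ range n, Y i ω} ≠ 0 := by
  refine exists_measure_ne_zero_of_ae_exists ?_
  filter_upwards [strong_law_ae Y hint hindep hident] with ω hω
  obtain ⟨M, hM⟩ := exists_forall_mul_sub_le_of_tendsto hω ha
  obtain ⟨N, hN⟩ := exists_nat_ge M
  exact ⟨N, fun n => (sub_le_sub_left hN _).trans (hM n)⟩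

section Walk

variable {Ω : Type*} {Z : ℕ → Ω → ℝ}

theorem measurable_walk [MeasurableSpace Ω] (hZ : ∀ n, Measurable (Z n)) (x : ℝ) (n : ℕ) :
    Measurable (walk Z x n) := by
  induction n with
  | zero => exact measurable_const
  | succ n ih => exact (ih.add (hZ (n + 1))).max measurable_const

theorem walk_eq_add_sum_of_pos {x : ℝ} {ω : Ω} {k : ℕ}
    (hpos : ∀ n, 1 ≤ n → n ≤ k → 0 < x + ∑ i ∈ range n, Z (i + 1) ω) :
    ∀ n ≤ k, walk Z x n ω = x + ∑ i ∈ range n, Z (i + 1) ω := by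
  intro n hn
  induction n with
  | zero => simp [walk]
  | succ n ih =>
    have hsum := hpos (n + 1) (by omega) hn
    rw [sum_range_succ, ← add_assoc] at hsum ⊢
    change max (walk Z x n ω + Z (n + 1) ω) 0 = _
    rw [ih (by omega), max_eq_left hsum.le]

theorem lt_hitZeroTime_iff {x : ℝ} {ω : Ω} {k : ℕ} :
    (k : ℕ∞) < hitZeroTime Z x ω ↔ ∀ n, 1 ≤ n → n ≤ k → walk Z x n ω ≠ 0 := by
  simp only [hitZeroTime, ← ENat.add_one_le_iff (ENat.natCast_ne_top k), le_iInf_iff]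
  refine forall_congr' fun n => ⟨fun h h1 hle h0 => ?_, fun h hn => ?_⟩
  · exact absurd (h ⟨h1, h0⟩) (by exact_mod_cast (by omega : ¬ k + 1 ≤ n))
  · by_contra hlt
    have hnk : n < k + 1 := by exact_mod_cast not_le.1 hlt
    exact h hn.1 (by omega) hn.2

theorem measurableSet_lt_hitZeroTime [MeasurableSpace Ω] (hZ : ∀ n, Measurable (Z n))
    (x : ℝ) (k : ℕ) : MeasurableSet {ω | (k : ℕ∞) < hitZeroTime Z x ω} := by
  simp_rw [lt_hitZeroTime_iff, Set.ofPred_forall]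
  exact .iInter fun n => .iInter fun _ => .iInter fun _ =>
    (measurable_walk hZ x n (measurableSet_singleton 0)).compl

theorem lt_hitZeroTime_zero_of_le {ω : Ω} {c M : ℝ} {k : ℕ}
    (hc : 0 < c) (hZ1 : c * k + M ≤ Z 1 ω)
    (hS : ∀ n : ℕ, -c * n - M ≤ ∑ i ∈ range n, Z (i + 2) ω) :
    (k : ℕ∞) < hitZeroTime Z 0 ω := by
  have hpos : ∀ n, 1 ≤ n → n ≤ k → 0 < 0 + ∑ i ∈ range n, Z (i + 1) ω := by
    rintro (_ | n) hn hnk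
    · omega
    have hnk' : (n : ℝ) + 1 ≤ k := by exact_mod_cast hnk
    rw [zero_add, sum_range_succ']
    nlinarith [hS n]
  refine lt_hitZeroTime_iff.2 fun n hn hnk => ?_
  rw [walk_eq_add_sum_of_pos hpos n hnk]
  exact (hpos n hn hnk).ne'

end Walk

theorem ENNReal.sum_range_pow_mul_sub_one_le {R : ℝ≥0∞} (hR : 1 ≤ R) (m : ℕ) :
    ∑ k ∈ range m, R ^ k * (R - 1) ≤ R ^ m := by
  induction m with
  | zero => simp
  | succ m ih =>
    calc ∑ k ∈ range (m + 1), R ^ k * (R - 1)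
        ≤ R ^ m + R ^ m * (R - 1) := by rw [sum_range_succ]; gcongr
      _ = R ^ (m + 1) := by rw [← mul_one_add, add_tsub_cancel_of_le hR, pow_succ]

theorem tsum_ite_lt_le_geomMoment {R : ℝ≥0∞} (hR : 1 ≤ R) (t : ℕ∞) :
    ∑' k : ℕ, (if (k : ℕ∞) < t then R ^ k * (R - 1) else 0) ≤ geomMoment R t := by
  induction t using ENat.recTopCoe with
  | top => simp [geomMoment]
  | coe m =>
    rw [tsum_eq_sum (s := range m) fun k hk => if_neg (by simpa using hk),
      sum_congr rfl fun k hk => if_pos (by simpa using hk)]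
    simpa [geomMoment] using ENNReal.sum_range_pow_mul_sub_one_le hR m

theorem lintegral_geomMoment_eq_top {Ω : Type*} [MeasurableSpace Ω] {μ : Measure Ω}
    {T : Ω → ℕ∞} (hT : ∀ k : ℕ, MeasurableSet {ω | (k : ℕ∞) < T ω}) {R : ℝ≥0∞} (hR : 1 < R)
    (hsum : ∑' k : ℕ, R ^ k * μ {ω | (k : ℕ∞) < T ω} = ⊤) :
    ∫⁻ ω, geomMoment R (T ω) ∂μ = ⊤ := by
  have hterm : ∀ k : ℕ, ∫⁻ ω, {ω | (k : ℕ∞) < T ω}.indicator (fun _ => R ^ k * (R - 1)) ω ∂μ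
      = (R - 1) * (R ^ k * μ {ω | (k : ℕ∞) < T ω}) := fun k => by
    rw [lintegral_indicator_const (hT k), mul_comm (R ^ k), mul_assoc]
  have hle : (R - 1) * ∑' k : ℕ, R ^ k * μ {ω | (k : ℕ∞) < T ω}
      ≤ ∫⁻ ω, geomMoment R (T ω) ∂μ := by
    rw [← ENNReal.tsum_mul_left, ← funext hterm,
      ← lintegral_tsum fun k => (measurable_const.indicator (hT k)).aemeasurable]
    refine lintegral_mono fun ω => ?_
    simpa only [Set.indicator_apply, Set.mem_ofPred_eq] using tsum_ite_lt_le_geomMoment hR.le (T ω)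
  rwa [hsum, ENNReal.mul_top (tsub_pos_of_lt hR).ne', top_le_iff] at hle

theorem ofReal_rpow_max_le_add_tsum {ρ c M : ℝ} (hρ : 1 < ρ) (hc : 0 < c) (hM : 0 ≤ M) (x : ℝ) :
    ENNReal.ofReal (ρ ^ max x 0) ≤ ENNReal.ofReal (ρ ^ M) +
      ∑' k : ℕ, (Set.Ici (c * k + M)).indicator
        (fun _ => ENNReal.ofReal (ρ ^ (c * (k + 1) + M))) x := by
  by_cases hxM : x ≤ M
  · exact le_add_right (ofReal_le_ofReal
      (Real.rpow_le_rpow_of_exponent_le hρ.le (max_le hxM hM)))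
  push Not at hxM
  set k := ⌊(x - M) / c⌋₊
  have hk_le : c * k + M ≤ x := by
    have := Nat.floor_le (div_nonneg (sub_nonneg.2 hxM.le) hc.le)
    rw [le_div_iff₀ hc] at this
    linarith
  have hk_lt : x ≤ c * (k + 1) + M := by
    have := Nat.lt_floor_add_one ((x - M) / c)
    rw [div_lt_iff₀ hc] at this
    linarith
  calc ENNReal.ofReal (ρ ^ max x 0)
      ≤ ENNReal.ofReal (ρ ^ (c * (k + 1) + M)) := by
        rw [max_eq_left (hM.trans hxM.le)]
        exact ofReal_le_ofReal (Real.rpow_le_rpow_of_exponent_le hρ.le hk_lt)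
    _ = (Set.Ici (c * k + M)).indicator
          (fun _ => ENNReal.ofReal (ρ ^ (c * (k + 1) + M))) x :=
        by rw [Set.indicator_of_mem (Set.mem_Ici.2 hk_le)]
    _ ≤ _ := (ENNReal.le_tsum k).trans le_add_self

theorem tsum_pow_mul_measure_le_eq_top {Ω : Type*} [MeasurableSpace Ω] {μ : Measure Ω}
    [IsFiniteMeasure μ] {X : Ω → ℝ} (hX : Measurable X)
    (hheavy : ∀ ρ : ℝ, 1 < ρ → ∫⁻ ω, ENNReal.ofReal (ρ ^ max (X ω) 0) ∂μ = ⊤)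
    {c M r : ℝ} (hc : 0 < c) (hM : 0 ≤ M) (hr : 1 < r) :
    ∑' k : ℕ, ENNReal.ofReal r ^ k * μ {ω | c * k + M ≤ X ω} = ⊤ := by
  set ρ := r ^ c⁻¹ -- so that `ρ ^ c = r` and the `k`-th bound term is a constant times `r ^ k`
  have hρ : 1 < ρ := Real.one_lt_rpow hr (inv_pos.2 hc)
  have hρ0 : 0 < ρ := zero_lt_one.trans hρ
  have hterm : ∀ k : ℕ, ENNReal.ofReal (ρ ^ (c * (k + 1) + M))
      = ENNReal.ofReal (ρ ^ (c + M)) * ENNReal.ofReal r ^ k := fun k => by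
    rw [← ENNReal.ofReal_pow (zero_lt_one.trans hr).le, ← ENNReal.ofReal_mul (by positivity),
      ← Real.rpow_inv_rpow (zero_lt_one.trans hr).le hc.ne', ← Real.rpow_natCast,
      ← Real.rpow_mul hρ0.le, ← Real.rpow_add hρ0]
    ring_nf
  by_contra hfin
  have hbound : ∫⁻ ω, ENNReal.ofReal (ρ ^ max (X ω) 0) ∂μ
      ≤ ENNReal.ofReal (ρ ^ M) * μ .univ + ENNReal.ofReal (ρ ^ (c + M)) *
        ∑' k : ℕ, ENNReal.ofReal r ^ k * μ {ω | c * k + M ≤ X ω} := by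
    calc _ ≤ ∫⁻ ω, ENNReal.ofReal (ρ ^ M) + ∑' k : ℕ, (Set.Ici (c * k + M)).indicator
            (fun _ => ENNReal.ofReal (ρ ^ (c * (k + 1) + M))) (X ω) ∂μ :=
          lintegral_mono fun ω => ofReal_rpow_max_le_add_tsum hρ hc hM (X ω)
      _ = _ := by
        rw [lintegral_add_left measurable_const, lintegral_const,
          lintegral_tsum fun k => by
            exact ((measurable_const.indicator measurableSet_Ici).comp hX).aemeasurable]
        simp_rw [lintegral_indicator_const_comp hX measurableSet_Ici, hterm, mul_assoc,
          ENNReal.tsum_mul_left]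
        rfl
  rw [hheavy ρ hρ, top_le_iff] at hbound
  exact ENNReal.add_ne_top.2 ⟨ENNReal.mul_ne_top ofReal_ne_top (measure_ne_top _ _),
    ENNReal.mul_ne_top ofReal_ne_top hfin⟩ hbound

/-- for the random walk on the half-line driven by i.i.d. increments `Z`
with `𝔼[Z] < 0`, if `𝔼[r^{Z⁺}] = ∞` for every `r > 1`, then `𝔼_0[r^{τ_0}] = ∞` for
every `r > 1`: the return time to the atom `0` has no finite geometric moment. -/
theorem stmt_16 {Ω : Type*} [MeasurableSpace Ω]
    (Pr : Measure Ω) [IsProbabilityMeasure Pr]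
    (Z : ℕ → Ω → ℝ) (hZmeas : ∀ n, Measurable (Z n))
    (hindep : ProbabilityTheory.iIndepFun Z Pr)
    (hident : ∀ n, ProbabilityTheory.IdentDistrib (Z n) (Z 0) Pr Pr)
    (hint : Integrable (Z 0) Pr)
    (μm : ℝ) (hmean : ∫ ω, Z 0 ω ∂Pr = -μm) (hμm : 0 < μm)
    (hheavy : ∀ r : ℝ, 1 < r →
      ∫⁻ ω, ENNReal.ofReal (r ^ (max (Z 0 ω) 0)) ∂Pr = ⊤) :
    ∀ r : ℝ, 1 < r →
      ∫⁻ ω, geomMoment (ENNReal.ofReal r) (hitZeroTime Z 0 ω) ∂Pr = ⊤ := by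
  intro r hr
  have hc : 0 < 2 * μm := by positivity
  obtain ⟨M, hB⟩ := exists_measure_forall_mul_sub_le_sum_ne_zero (Y := fun i => Z (i + 2))
    ((hident 2).integrable_iff.2 hint)
    (fun i j hij => hindep.indepFun (by omega : i + 2 ≠ j + 2))
    (fun i => (hident (i + 2)).trans (hident 2).symm)
    (a := -(2 * μm)) (by rw [(hident 2).integral_eq, hmean]; linarith)
  set B := {ω | ∀ n : ℕ, -(2 * μm) * n - M ≤ ∑ i ∈ range n, Z (i + 2) ω}
  have hA : MeasurableSet {u : ℕ → ℝ | ∀ n : ℕ, -(2 * μm) * n - M ≤ ∑ i ∈ range n, u i} := by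
    simp_rw [Set.ofPred_forall]
    exact .iInter fun n => measurableSet_le measurable_const
      (Finset.measurable_sum _ fun i _ => measurable_pi_apply i)
  have hsurvive : ∀ k : ℕ, Pr B * Pr {ω | 2 * μm * k + M ≤ Z 0 ω}
      ≤ Pr {ω | (k : ℕ∞) < hitZeroTime Z 0 ω} := fun k => calc
    _ = Pr (Z 1 ⁻¹' Set.Ici (2 * μm * k + M)) * Pr B := by
      rw [mul_comm, (hident 1).measure_mem_eq measurableSet_Ici]; rfl
    _ = Pr (Z 1 ⁻¹' Set.Ici (2 * μm * k + M) ∩ B) :=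
      ((hindep.indepFun_tail hZmeas 1).measure_inter_preimage_eq_mul _ _ measurableSet_Ici hA).symm
    _ ≤ _ := measure_mono fun ω hω => lt_hitZeroTime_zero_of_le hc hω.1 hω.2
  refine lintegral_geomMoment_eq_top (measurableSet_lt_hitZeroTime hZmeas 0)
    (ENNReal.one_lt_ofReal.2 hr) (top_le_iff.1 ?_)
  calc ⊤ = Pr B * ∑' k : ℕ, ENNReal.ofReal r ^ k * Pr {ω | 2 * μm * k + M ≤ Z 0 ω} := by
        rw [tsum_pow_mul_measure_le_eq_top (hZmeas 0) hheavy hc (Nat.cast_nonneg M) hr,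
          ENNReal.mul_top hB]
    _ ≤ _ := by
      rw [← ENNReal.tsum_mul_left]
      exact ENNReal.tsum_le_tsum fun k => by rw [mul_left_comm]; gcongr; exact hsurvive k
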